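/- arXiv:2308.06793 — 5 statements merged into one kernel-verified Lean document; each statement's English description precedes it below -/
import Mathlib

section
/- Let h : Y → ℝ be concave satisfying the quadratic growth condition h(y) ≤ max h − b·dist²(y, Z) near the solution set Z = argmax h, for some b > 0. If a sequence yᵏ is generated by exact proximal point iterations yᵏ⁺¹ = argmax_y { h(y) − (1/(2c))‖y − yᵏ‖² } with fixed parameter c > 0, then dist(yᵏ, Z) → 0 Q-linearly with rate 1/√(1 + b²c²), i.e. dist(yᵏ⁺¹, Z) ≤ dist(yᵏ, Z)/√(1+b²c²) for all k with yᵏ sufficiently close to Z. -/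
open scoped RealInnerProductSpace

lemma norm_combo {Y : Type*} [NormedAddCommGroup Y] [InnerProductSpace ℝ Y]
    (a b : Y) (t : ℝ) :
    ‖a + t • (b - a)‖ ^ 2 = (1 - t) * ‖a‖ ^ 2 + t * ‖b‖ ^ 2 - t * (1 - t) * ‖b - a‖ ^ 2 := by
  have e : ∀ x : Y, ‖x‖ ^ 2 = ⟪x, x⟫ := fun x => (real_inner_self_eq_norm_sq x).symm
  rw [e, e, e, e]
  simp only [inner_add_left, inner_add_right, inner_sub_left, inner_sub_right,
    real_inner_smul_left, real_inner_smul_right, real_inner_comm a b]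
  ring

lemma strong_ineq {Y : Type*} [NormedAddCommGroup Y] [InnerProductSpace ℝ Y]
    (h : Y → ℝ) (hconc : ConcaveOn ℝ Set.univ h) (c : ℝ) (hc : 0 < c)
    (yk yp : Y)
    (hmax : ∀ y' : Y, h y' - (1 / (2 * c)) * ‖y' - yk‖ ^ 2 ≤
      h yp - (1 / (2 * c)) * ‖yp - yk‖ ^ 2) (y' : Y) :
    h y' - (1 / (2 * c)) * ‖y' - yk‖ ^ 2 + (1 / (2 * c)) * ‖y' - yp‖ ^ 2 ≤
      h yp - (1 / (2 * c)) * ‖yp - yk‖ ^ 2 := by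
  refine le_of_forall_pos_le_add (fun ε hε => ?_)
  set Q : ℝ := ‖y' - yp‖ ^ 2 with hQ
  have hQ0 : 0 ≤ Q := sq_nonneg _
  set t : ℝ := min 1 (2 * c * ε / (Q + 1)) with ht
  have ht0 : 0 < t := lt_min one_pos (by positivity)
  have ht1 : t ≤ 1 := min_le_left _ _
  -- key inequality at the convex combination
  have hcomb : h (yp + t • (y' - yp)) ≥ (1 - t) * h yp + t * h y' := by
    have := hconc.2 (Set.mem_univ yp) (Set.mem_univ y') (by linarith : (0:ℝ) ≤ 1 - t)
      (le_of_lt ht0) (by ring)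
    simpa [smul_eq_mul, smul_sub, sub_smul, one_smul] using this.trans_eq
      (congrArg h (by module : (1 - t) • yp + t • y' = yp + t • (y' - yp)))
  have hnorm : ‖yp + t • (y' - yp) - yk‖ ^ 2 =
      (1 - t) * ‖yp - yk‖ ^ 2 + t * ‖y' - yk‖ ^ 2 - t * (1 - t) * Q := by
    have := norm_combo (yp - yk) (y' - yk) t
    have e1 : (yp - yk) + t • ((y' - yk) - (yp - yk)) = yp + t • (y' - yp) - yk := by module
    have e2 : (y' - yk) - (yp - yk) = y' - yp := by module
    rw [e1, e2] at this
    rw [this, hQ]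
  have hit := hmax (yp + t • (y' - yp))
  rw [hnorm] at hit
  have hcomb' : (1 - t) * h yp + t * h y' -
      1 / (2 * c) * ((1 - t) * ‖yp - yk‖ ^ 2 + t * ‖y' - yk‖ ^ 2 - t * (1 - t) * Q) ≤
      h yp - 1 / (2 * c) * ‖yp - yk‖ ^ 2 := by linarith [hcomb]
  have key : t * (h y' - (1 / (2 * c)) * ‖y' - yk‖ ^ 2 + ((1 - t) / (2 * c)) * Q) ≤
      t * (h yp - (1 / (2 * c)) * ‖yp - yk‖ ^ 2) := by
    have hid : t * (h y' - (1 / (2 * c)) * ‖y' - yk‖ ^ 2 + ((1 - t) / (2 * c)) * Q) -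
        t * (h yp - (1 / (2 * c)) * ‖yp - yk‖ ^ 2) =
        ((1 - t) * h yp + t * h y' -
          1 / (2 * c) * ((1 - t) * ‖yp - yk‖ ^ 2 + t * ‖y' - yk‖ ^ 2 - t * (1 - t) * Q)) -
        (h yp - 1 / (2 * c) * ‖yp - yk‖ ^ 2) := by ring
    linarith [hid, hcomb']
  have hdd := le_of_mul_le_mul_left key ht0
  have hexp : ((1 - t) / (2 * c)) * Q = (1 / (2 * c)) * Q - (t / (2 * c)) * Q := by ring
  have htQ : (t / (2 * c)) * Q ≤ ε := by
    have h2 : (0:ℝ) < Q + 1 := by linarith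
    have h1' : t * (Q + 1) ≤ 2 * c * ε := (le_div_iff₀ h2).mp (min_le_right _ _)
    rw [div_mul_eq_mul_div, div_le_iff₀ (by positivity : (0:ℝ) < 2 * c)]
    nlinarith [ht0.le]
  linarith

/-- Q-linear convergence of exact proximal point iterations on a concave function with
quadratic growth: `dist(yᵏ⁺¹, Z) ≤ dist(yᵏ, Z)/√(1 + b²c²)` whenever `yᵏ` is close to `Z`. -/
theorem ppa_qlinear_rate
    {Y : Type*} [NormedAddCommGroup Y] [InnerProductSpace ℝ Y] [FiniteDimensional ℝ Y]
    (h : Y → ℝ) (hconc : ConcaveOn ℝ Set.univ h)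
    (Z : Set Y) (hZ : Z = {y | ∀ y', h y' ≤ h y})
    (hZne : Z.Nonempty) (hZcl : IsClosed Z) (hZconv : Convex ℝ Z)
    (M : ℝ) (hM : ∀ z ∈ Z, h z = M)
    (b lam : ℝ) (hb : 0 < b) (hlam : 0 < lam)
    (hgrow : ∀ y : Y, Metric.infDist y Z < lam → h y ≤ M - b * (Metric.infDist y Z) ^ 2)
    (c : ℝ) (hc : 0 < c) (y : ℕ → Y)
    (hiter : ∀ k, ∀ y' : Y,
      h y' - (1 / (2 * c)) * ‖y' - y k‖ ^ 2 ≤ h (y (k + 1)) - (1 / (2 * c)) * ‖y (k + 1) - y k‖ ^ 2) :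
    ∀ k, Metric.infDist (y k) Z < lam →
      Metric.infDist (y (k + 1)) Z ≤ Metric.infDist (y k) Z / Real.sqrt (1 + b ^ 2 * c ^ 2) := by
  intro k hk
  set yk := y k with hyk
  set yp := y (k + 1) with hyp
  have hR2 : Real.sqrt (1 + b ^ 2 * c ^ 2) ^ 2 = 1 + b ^ 2 * c ^ 2 :=
    Real.sq_sqrt (by positivity)
  have hRpos : 0 < Real.sqrt (1 + b ^ 2 * c ^ 2) := Real.sqrt_pos.mpr (by positivity)
  set R := Real.sqrt (1 + b ^ 2 * c ^ 2) with hRdef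
  -- upper bound on h
  obtain ⟨z0, hz0⟩ := hZne
  have hub : ∀ y', h y' ≤ M := by
    intro y'
    have hz0' : ∀ y', h y' ≤ h z0 := by rw [hZ] at hz0; exact hz0
    calc h y' ≤ h z0 := hz0' y'
    _ = M := hM z0 hz0
  have hstar := strong_ineq h hconc c hc yk yp (hiter k)
  have hu : (0:ℝ) < 1 / (2 * c) := by positivity
  set d := Metric.infDist yk Z with hd
  set dp := Metric.infDist yp Z with hdp
  have hd0 : 0 ≤ d := Metric.infDist_nonneg
  have hdp0 : 0 ≤ dp := Metric.infDist_nonneg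
  set s := ‖yp - yk‖ with hs
  have hs0 : 0 ≤ s := norm_nonneg _
  -- projection of yk
  obtain ⟨z, hzZ, hz⟩ := hZcl.exists_infDist_eq_dist ⟨z0, hz0⟩ yk
  have hzd : ‖z - yk‖ = d := by
    rw [hd, hz, dist_eq_norm, norm_sub_rev]
  -- Fejér step: ‖z - yp‖² + s² ≤ d²
  have hfej : ‖z - yp‖ ^ 2 + s ^ 2 ≤ d ^ 2 := by
    have h1 := hstar z
    rw [hzd, hM z hzZ] at h1
    have h2 : h yp ≤ M := hub yp
    nlinarith [h1, h2, hu]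
  have hdp_le : dp ≤ d := by
    have h1 : dp ≤ ‖z - yp‖ := by
      rw [hdp]
      calc Metric.infDist yp Z ≤ dist yp z := Metric.infDist_le_dist_of_mem hzZ
      _ = ‖z - yp‖ := by rw [dist_eq_norm, norm_sub_rev]
    nlinarith [norm_nonneg (z - yp), sq_nonneg s]
  have hdplam : dp < lam := lt_of_le_of_lt hdp_le hk
  -- growth at yp
  have hgrw : h yp ≤ M - b * dp ^ 2 := hgrow yp hdplam
  -- projection of yp
  obtain ⟨w, hwZ, hw⟩ := hZcl.exists_infDist_eq_dist ⟨z0, hz0⟩ yp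
  have hwd : ‖w - yp‖ = dp := by
    rw [hdp, hw, dist_eq_norm, norm_sub_rev]
  -- error bound: b*c*dp² ≤ dp*s
  have herr : b * c * dp ^ 2 ≤ dp * s := by
    have h1 := hstar w
    rw [hwd, hM w hwZ] at h1
    have hexp : ‖w - yk‖ ^ 2 = dp ^ 2 + 2 * ⟪w - yp, yp - yk⟫ + s ^ 2 := by
      have e : w - yk = (w - yp) + (yp - yk) := by module
      rw [e, norm_add_sq_real, hwd, hs]
    have hcs : ⟪w - yp, yp - yk⟫ ≤ dp * s := by
      calc ⟪w - yp, yp - yk⟫ ≤ ‖w - yp‖ * ‖yp - yk‖ := real_inner_le_norm _ _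
      _ = dp * s := by rw [hwd, hs]
    rw [hexp] at h1
    have h2 : h yp ≤ M - b * dp ^ 2 := hgrw
    have h3 : b * dp ^ 2 ≤ 2 * (1 / (2 * c)) * ⟪w - yp, yp - yk⟫ := by linarith
    have h4 : c * (2 * (1 / (2 * c)) * ⟪w - yp, yp - yk⟫) = ⟪w - yp, yp - yk⟫ := by
      field_simp
    have h5 := mul_le_mul_of_nonneg_left h3 hc.le
    rw [h4] at h5
    nlinarith [h5, hcs, hc.le]
  -- combine
  clear_value yk yp R d dp s
  rw [le_div_iff₀ hRpos]
  rcases eq_or_lt_of_le hdp0 with h0 | h0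
  · rw [← h0, zero_mul]; exact hd0
  · have hbs : b * c * dp ≤ s := by
      have h6 : dp * (b * c * dp) ≤ dp * s := by
        have e : dp * (b * c * dp) = b * c * dp ^ 2 := by ring
        rw [e]; exact herr
      exact le_of_mul_le_mul_left h6 h0
    have hsq : (dp * R) ^ 2 ≤ d ^ 2 := by
      have : (dp * R) ^ 2 = dp ^ 2 + (b * c * dp) ^ 2 := by
        rw [mul_pow, hR2]; ring
      rw [this]
      have h1 : (b * c * dp) ^ 2 ≤ s ^ 2 :=
        pow_le_pow_left₀ (by positivity) hbs 2
      have h2 : dp ^ 2 + s ^ 2 ≤ d ^ 2 := by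
        have h3 : dp ≤ ‖z - yp‖ := by
          rw [hdp]
          calc Metric.infDist yp Z ≤ dist yp z := Metric.infDist_le_dist_of_mem hzZ
          _ = ‖z - yp‖ := by rw [dist_eq_norm, norm_sub_rev]
        have h4 : dp ^ 2 ≤ ‖z - yp‖ ^ 2 := pow_le_pow_left₀ hdp0 h3 2
        linarith
      linarith
    exact le_of_pow_le_pow_left₀ two_ne_zero hd0 hsq
end

section
/- Let θ(z) = μ‖z‖₁ on ℝ^{m×n} with μ > 0, let X ∈ ℝ^{m×n}, and let y ∈ ∂θ(X) (so y_{ij} = μ·sgn(X_{ij}) when X_{ij} ≠ 0 and |y_{ij}| ≤ μ otherwise). Then the critical cone C = { d : θ'(X; d) = ⟨d, y⟩ } satisfies: its affine hull is aff C = { d : d_{ij} = 0 whenever |y_{ij}| < μ }. -/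
/-!
The one-sided derivative of `|·|` at `a` in direction `b` is `|b|` if `a = 0` and `sign a * b`
otherwise, and a subgradient entry `y` gives `b * y ≤ μ` times it. Summing over the entries, `d`
is critical iff equality holds entrywise, i.e. `d i j * y i j = μ * |d i j|` wherever `X i j = 0`.
This cone contains `0`, so its affine hull is its linear span. It forces `d i j = 0` where
`|y i j| < μ`, and contains `single i j (y i j)` where `|y i j| = μ`, which spans the rest.
-/

open Filter Topology

/-- The scaled entrywise ℓ₁ norm `θ(Z) = μ Σ_{i,j} |Z_{ij}|` on matrices. -/
def matrixL1 {m n : ℕ} (μ : ℝ) (Z : Matrix (Fin m) (Fin n) ℝ) : ℝ :=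
  μ * ∑ i, ∑ j, |Z i j|

noncomputable def absDirDeriv (a b : ℝ) : ℝ :=
  if a = 0 then |b| else Real.sign a * b

theorem tendsto_abs_add_mul_sub_div (a b : ℝ) :
    Tendsto (fun t : ℝ => (|a + t * b| - |a|) / t) (𝓝[>] 0) (𝓝 (absDirDeriv a b)) := by
  unfold absDirDeriv
  split_ifs with ha
  · subst ha
    refine tendsto_const_nhds.congr' ?_
    filter_upwards [self_mem_nhdsWithin] with t (ht : 0 < t)
    rw [zero_add, abs_zero, sub_zero, abs_mul, abs_of_pos ht, mul_div_cancel_left₀ _ ht.ne']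
  · have hsign : (SignType.sign a : ℝ) = Real.sign a := by
      rcases Ne.lt_or_gt ha with h | h <;> simp [h, Real.sign_of_neg, Real.sign_of_pos]
    have hd : HasDerivAt (fun t => |a + t * b|) (Real.sign a * b) 0 := by
      have := (hasDerivAt_abs (by simpa using ha)).comp (0 : ℝ)
        (((hasDerivAt_id (0 : ℝ)).mul_const b).const_add a)
      simp only [id, zero_mul, add_zero, one_mul, hsign] at this
      exact this
    simpa [div_eq_inv_mul] using hd.tendsto_slope_zero_right

theorem matrixL1_add_smul_sub_div {m n : ℕ} (μ t : ℝ) (X d : Matrix (Fin m) (Fin n) ℝ) :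
    (matrixL1 μ (X + t • d) - matrixL1 μ X) / t
      = μ * ∑ i, ∑ j, (|X i j + t * d i j| - |X i j|) / t := by
  simp [matrixL1, Finset.sum_div, ← mul_sub, mul_div_assoc, ← Finset.sum_sub_distrib]

theorem tendsto_matrixL1_slope {m n : ℕ} (μ : ℝ) (X d : Matrix (Fin m) (Fin n) ℝ) :
    Tendsto (fun t : ℝ => (matrixL1 μ (X + t • d) - matrixL1 μ X) / t) (𝓝[>] 0)
      (𝓝 (μ * ∑ i, ∑ j, absDirDeriv (X i j) (d i j))) := by
  simp_rw [matrixL1_add_smul_sub_div]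
  exact (tendsto_finsetSum _ fun i _ => tendsto_finsetSum _ fun j _ =>
    tendsto_abs_add_mul_sub_div _ _).const_mul μ

theorem Finset.sum_sum_eq_sum_sum_iff_of_le {ι κ M : Type*} [Fintype ι] [Fintype κ]
    [AddCommMonoid M] [PartialOrder M] [IsOrderedCancelAddMonoid M] {f g : ι → κ → M}
    (h : ∀ i j, f i j ≤ g i j) :
    ∑ i, ∑ j, f i j = ∑ i, ∑ j, g i j ↔ ∀ i j, f i j = g i j := by
  rw [← Fintype.sum_prod_type', ← Fintype.sum_prod_type',
    Finset.sum_eq_sum_iff_of_le fun (p : ι × κ) _ => h p.1 p.2]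
  simp [Prod.forall]

theorem mul_le_mul_absDirDeriv {μ a b y : ℝ} (hy₁ : a ≠ 0 → y = μ * Real.sign a)
    (hy₂ : |y| ≤ μ) : b * y ≤ μ * absDirDeriv a b := by
  unfold absDirDeriv
  split_ifs with ha
  · calc b * y ≤ |b| * |y| := (le_abs_self _).trans (abs_mul b y).le
      _ ≤ μ * |b| := by rw [mul_comm μ]; exact mul_le_mul_of_nonneg_left hy₂ (abs_nonneg b)
  · rw [hy₁ ha]; exact le_of_eq (by ring)

theorem mul_eq_mul_absDirDeriv_iff {μ a b y : ℝ} (hy₁ : a ≠ 0 → y = μ * Real.sign a) :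
    b * y = μ * absDirDeriv a b ↔ (a = 0 → b * y = μ * |b|) := by
  unfold absDirDeriv
  split_ifs with ha
  · simp [ha]
  · simp only [ha, false_imp_iff, iff_true, hy₁ ha]; ring

theorem eq_zero_of_mul_eq_mul_abs {μ b y : ℝ} (h : b * y = μ * |b|) (hy : |y| < μ) : b = 0 :=
  abs_eq_zero.1 (by nlinarith [le_abs_self (b * y), abs_mul b y, abs_nonneg b])

theorem Matrix.span_eq_setOf_of_single_mem {K ι κ : Type*} [Field K] [Fintype ι] [Fintype κ]
    [DecidableEq ι] [DecidableEq κ] {C : Set (Matrix ι κ K)} {p : ι → κ → Prop}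
    (hC : ∀ d ∈ C, ∀ i j, p i j → d i j = 0)
    (hsingle : ∀ i j, ¬ p i j → ∃ c ≠ 0, Matrix.single i j c ∈ C) :
    (Submodule.span K C : Set (Matrix ι κ K)) = {d | ∀ i j, p i j → d i j = 0} := by
  ext d
  constructor
  · intro hd i j hp
    induction hd using Submodule.span_induction with
    | mem x hx => exact hC x hx i j hp
    | zero => rfl
    | add x z _ _ hx hz => simp [hx, hz]
    | smul r x _ hx => simp [hx]
  · intro hd
    rw [SetLike.mem_coe, d.matrix_eq_sum_single]
    refine Submodule.sum_mem _ fun i _ => Submodule.sum_mem _ fun j _ => ?_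
    by_cases hp : p i j
    · simp [hd i j hp]
    · obtain ⟨c, hc, hmem⟩ := hsingle i j hp
      rw [← div_mul_cancel₀ (d i j) hc, ← smul_eq_mul, ← Matrix.smul_single]
      exact Submodule.smul_mem _ _ (Submodule.subset_span hmem)

theorem tendsto_matrixL1_slope_iff {m n : ℕ} {μ : ℝ} {X y : Matrix (Fin m) (Fin n) ℝ}
    (hy₁ : ∀ i j, X i j ≠ 0 → y i j = μ * Real.sign (X i j)) (hy₂ : ∀ i j, |y i j| ≤ μ)
    (d : Matrix (Fin m) (Fin n) ℝ) :
    Tendsto (fun t : ℝ => (matrixL1 μ (X + t • d) - matrixL1 μ X) / t) (𝓝[>] 0)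
        (𝓝 (∑ i, ∑ j, d i j * y i j)) ↔
      ∀ i j, X i j = 0 → d i j * y i j = μ * |d i j| := by
  have hlim := tendsto_matrixL1_slope μ X d
  have hcrit : ∑ i, ∑ j, d i j * y i j = μ * ∑ i, ∑ j, absDirDeriv (X i j) (d i j) ↔
      ∀ i j, X i j = 0 → d i j * y i j = μ * |d i j| := by
    simp_rw [Finset.mul_sum]
    exact (Finset.sum_sum_eq_sum_sum_iff_of_le (f := fun i j => d i j * y i j)
      fun i j => mul_le_mul_absDirDeriv (hy₁ i j) (hy₂ i j)).trans <|
      forall₂_congr fun i j => mul_eq_mul_absDirDeriv_iff (hy₁ i j)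
  rw [← hcrit]
  exact ⟨fun h => tendsto_nhds_unique h hlim, fun h => h ▸ hlim⟩

/-- Affine hull of the critical cone of `θ = μ‖·‖₁`: with `y ∈ ∂θ(X)`, the critical cone
`C = { d : θ'(X;d) = ⟨d,y⟩ }` has affine hull `{ d : d_{ij} = 0 whenever |y_{ij}| < μ }`. -/
theorem affine_hull_critical_cone_l1 {m n : ℕ} (μ : ℝ) (hμ : 0 < μ)
    (X y : Matrix (Fin m) (Fin n) ℝ)
    (hy₁ : ∀ i j, X i j ≠ 0 → y i j = μ * Real.sign (X i j))
    (hy₂ : ∀ i j, |y i j| ≤ μ) :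
    (affineSpan ℝ
        {d : Matrix (Fin m) (Fin n) ℝ |
          Filter.Tendsto (fun t : ℝ => (matrixL1 μ (X + t • d) - matrixL1 μ X) / t)
            (nhdsWithin 0 (Set.Ioi 0)) (nhds (∑ i, ∑ j, d i j * y i j))} :
        Set (Matrix (Fin m) (Fin n) ℝ)) =
      {d : Matrix (Fin m) (Fin n) ℝ | ∀ i j, |y i j| < μ → d i j = 0} := by
  set C := {d : Matrix (Fin m) (Fin n) ℝ | ∀ i j, X i j = 0 → d i j * y i j = μ * |d i j|}
  have hC : {d : Matrix (Fin m) (Fin n) ℝ |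
      Tendsto (fun t : ℝ => (matrixL1 μ (X + t • d) - matrixL1 μ X) / t) (𝓝[>] 0)
        (𝓝 (∑ i, ∑ j, d i j * y i j))} = C :=
    Set.ext fun d => tendsto_matrixL1_slope_iff hy₁ hy₂ d
  have hzero : (0 : Matrix (Fin m) (Fin n) ℝ) ∈ C := by simp [C]
  rw [hC, ← Set.insert_eq_of_mem hzero, affineSpan_insert_zero]
  refine Matrix.span_eq_setOf_of_single_mem (fun d hd i j hlt => ?_) fun i j hge => ?_
  · have hX : X i j = 0 := by
      by_contra hX
      rcases Real.sign_apply_eq_of_ne_zero _ hX with h | h <;>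
        simp [hy₁ i j hX, h, abs_of_pos hμ] at hlt
    exact eq_zero_of_mul_eq_mul_abs (hd i j hX) hlt
  · have hyμ : |y i j| = μ := le_antisymm (hy₂ i j) (not_lt.1 hge)
    refine ⟨y i j, fun h => hμ.ne' (by simpa [h] using hyμ.symm), fun k l _ => ?_⟩
    rw [Matrix.single_apply]
    split_ifs with h
    · obtain ⟨rfl, rfl⟩ := h
      rw [← hyμ, abs_mul_abs_self]
    · simp
end

section
/- Let f, h : ℝⁿ → (-∞,∞] with h proper lsc convex, h ≤ f on an open convex set W, and suppose [W × Z] ∩ gph ∂h = [W × Z] ∩ gph ∂f with f(w) = h(w) on this common set, where Z is an open convex set. If (w̄, z̄) belongs to this common set and h is strongly convex on W with modulus s, then w̄ is a local minimizer of w ↦ f(w) − ⟨z̄, w⟩ and moreover f(w) − ⟨z̄, w⟩ ≥ f(w̄) − ⟨z̄, w̄⟩ + (s/2)‖w − w̄‖² for all w ∈ W. -/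
open scoped RealInnerProductSpace

/-!
A convex subgradient `z̄` of `h` at `w̄` gives `h w̄ + t⟪z̄, w - w̄⟫ ≤ h(w̄ + t(w - w̄))`; comparing
with the strong convexity inequality along the segment, dividing by `t` and letting `t → 0⁺`
yields `h w ≥ h w̄ + ⟪z̄, w - w̄⟫ + (s/2)‖w - w̄‖²` on `W`. Since `f ≥ h` on `W` and
`f w̄ = h w̄`, the same bound holds for `f`, and it forces a minimum of `f - ⟪z̄, ·⟫` on the
open set `W`.
-/

/-- The Fréchet (regular) subdifferential of `f : E → (-∞,∞]` at `x`. -/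
def FSubdiff {E : Type*} [NormedAddCommGroup E] [InnerProductSpace ℝ E]
    (f : E → EReal) (x : E) : Set E :=
  {v | ∀ ε > (0 : ℝ), ∀ᶠ h in nhds (0 : E),
    f x + ((⟪v, h⟫ - ε * ‖h‖ : ℝ) : EReal) ≤ f (x + h)}

/-- The convex subdifferential of `h : E → (-∞,∞]` at `x`. -/
def CSubdiff {E : Type*} [NormedAddCommGroup E] [InnerProductSpace ℝ E]
    (h : E → EReal) (x : E) : Set E :=
  {v | ∀ w, h x + ((⟪v, w - x⟫ : ℝ) : EReal) ≤ h w}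

open Set Filter Topology

lemma add_add_mul_le_of_forall_mem_Ioo {a b g c q : ℝ}
    (hchord : ∀ t ∈ Ioo (0 : ℝ) 1, a + t * g + c * t * (1 - t) * q ≤ t * b + (1 - t) * a) :
    a + g + c * q ≤ b := by
  have hslope : ∀ t ∈ Ioo (0 : ℝ) 1, g + c * (1 - t) * q ≤ b - a := fun t ht => by
    refine le_of_mul_le_mul_left ?_ ht.1
    linarith [hchord t ht]
  have hlim : Tendsto (fun t : ℝ => g + c * (1 - t) * q) (𝓝[>] 0) (𝓝 (g + c * q)) := by
    have : Continuous (fun t : ℝ => g + c * (1 - t) * q) := by fun_prop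
    simpa using (this.tendsto 0).mono_left nhdsWithin_le_nhds
  have := le_of_tendsto hlim (eventually_of_mem (Ioo_mem_nhdsGT one_pos) hslope)
  linarith

theorem quadratic_growth_of_mem_CSubdiff {E : Type*} [NormedAddCommGroup E]
    [InnerProductSpace ℝ E] {h : E → EReal} {x z w : E} {s : ℝ} (hz : z ∈ CSubdiff h x)
    (hstrong : ∀ t : ℝ, 0 ≤ t → t ≤ 1 →
      h (t • w + (1 - t) • x) + (((s / 2) * t * (1 - t) * ‖w - x‖ ^ 2 : ℝ) : EReal) ≤
        (t : EReal) * h w + ((1 - t : ℝ) : EReal) * h x) :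
    h x + ((⟪z, w - x⟫ + s / 2 * ‖w - x‖ ^ 2 : ℝ) : EReal) ≤ h w := by
  induction hx : h x using EReal.rec with
  | bot => rw [EReal.bot_add]; exact bot_le
  | top =>
    have := hz w
    rw [hx, EReal.top_add_coe] at this
    rwa [EReal.top_add_coe]
  | coe a =>
    induction hw : h w using EReal.rec with
    | bot => simpa [hx, hw, ← EReal.coe_add] using hz w
    | top => exact le_top
    | coe b =>
      rw [← EReal.coe_add, EReal.coe_le_coe_iff, ← add_assoc]
      refine add_add_mul_le_of_forall_mem_Ioo fun t ht => ?_
      have hsub : (t • w + (1 - t) • x) - x = t • (w - x) := by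
        rw [smul_sub, sub_smul, one_smul]; abel
      have hsubgrad := hz (t • w + (1 - t) • x)
      rw [hsub, real_inner_smul_right, hx] at hsubgrad
      have hchord := (add_le_add_left hsubgrad _).trans (hstrong t ht.1.le ht.2.le)
      rw [hx, hw] at hchord
      exact_mod_cast hchord

theorem variational_strong_convexity_growth_general
    {E : Type*} [NormedAddCommGroup E] [InnerProductSpace ℝ E]
    (W Z : Set E) (hWo : IsOpen W)
    (f h : E → EReal)
    (hle : ∀ w ∈ W, h w ≤ f w)
    (s : ℝ) (hs : 0 < s)
    (hstrong : ∀ w₁ ∈ W, ∀ w₂ ∈ W, ∀ t : ℝ, 0 ≤ t → t ≤ 1 →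
      h (t • w₁ + (1 - t) • w₂) + (((s / 2) * t * (1 - t) * ‖w₁ - w₂‖ ^ 2 : ℝ) : EReal) ≤
        (t : EReal) * h w₁ + ((1 - t : ℝ) : EReal) * h w₂)
    (hgraph : ∀ w ∈ W, ∀ z ∈ Z, (z ∈ CSubdiff h w ↔ z ∈ FSubdiff f w))
    (hval : ∀ w ∈ W, ∀ z ∈ Z, z ∈ FSubdiff f w → f w = h w)
    (wbar zbar : E) (hwbar : wbar ∈ W) (hzbar : zbar ∈ Z)
    (hmem : zbar ∈ FSubdiff f wbar) :
    (∃ U ∈ nhds wbar, ∀ w ∈ U,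
      f wbar - ((⟪zbar, wbar⟫ : ℝ) : EReal) ≤ f w - ((⟪zbar, w⟫ : ℝ) : EReal)) ∧
    (∀ w ∈ W,
      f wbar - ((⟪zbar, wbar⟫ : ℝ) : EReal) + (((s / 2) * ‖w - wbar‖ ^ 2 : ℝ) : EReal) ≤
        f w - ((⟪zbar, w⟫ : ℝ) : EReal)) := by
  have hsubgrad : zbar ∈ CSubdiff h wbar := (hgraph wbar hwbar zbar hzbar).mpr hmem
  have hfval : f wbar = h wbar := hval wbar hwbar zbar hzbar hmem
  have growth : ∀ w ∈ W,
      f wbar - ((⟪zbar, wbar⟫ : ℝ) : EReal) + (((s / 2) * ‖w - wbar‖ ^ 2 : ℝ) : EReal) ≤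
        f w - ((⟪zbar, w⟫ : ℝ) : EReal) := fun w hw =>
    calc f wbar - ((⟪zbar, wbar⟫ : ℝ) : EReal) + (((s / 2) * ‖w - wbar‖ ^ 2 : ℝ) : EReal)
        = h wbar + ((⟪zbar, w - wbar⟫ + s / 2 * ‖w - wbar‖ ^ 2 : ℝ) : EReal)
            - ((⟪zbar, w⟫ : ℝ) : EReal) := by
          rw [hfval]
          simp only [sub_eq_add_neg (h wbar), sub_eq_add_neg (h wbar + _), ← EReal.coe_neg,
            add_assoc, ← EReal.coe_add, inner_sub_right]
          congr 2; ring
      _ ≤ f w - ((⟪zbar, w⟫ : ℝ) : EReal) :=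
          EReal.sub_le_sub ((quadratic_growth_of_mem_CSubdiff hsubgrad
            (hstrong w hw wbar hwbar)).trans (hle w hw)) le_rfl
  refine ⟨⟨W, hWo.mem_nhds hwbar, fun w hw => le_trans ?_ (growth w hw)⟩, growth⟩
  exact le_add_of_nonneg_right (EReal.coe_nonneg.mpr (by positivity))

/-- Local growth consequence of variational strong convexity: if a strongly convex
minorant `h` agrees with `f` in graph of subdifferential and in value on `W × Z`, and
`(w̄, z̄)` lies in the common graph, then `w̄` is a local minimizer of `f − ⟨z̄,·⟩` and
`f(w) − ⟨z̄,w⟩ ≥ f(w̄) − ⟨z̄,w̄⟩ + (s/2)‖w − w̄‖²` on `W`. -/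
theorem variational_strong_convexity_growth
    {E : Type*} [NormedAddCommGroup E] [InnerProductSpace ℝ E] [FiniteDimensional ℝ E]
    (W Z : Set E) (hWo : IsOpen W) (hWc : Convex ℝ W) (hZo : IsOpen Z) (hZc : Convex ℝ Z)
    (f h : E → EReal)
    (hproper : ∃ w, h w ≠ ⊤) (hbot : ∀ w, h w ≠ ⊥)
    (hlsc : LowerSemicontinuous h)
    (hconv : ∀ w₁ w₂ : E, ∀ t : ℝ, 0 ≤ t → t ≤ 1 →
      h (t • w₁ + (1 - t) • w₂) ≤ (t : EReal) * h w₁ + ((1 - t : ℝ) : EReal) * h w₂)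
    (hle : ∀ w ∈ W, h w ≤ f w)
    (s : ℝ) (hs : 0 < s)
    (hstrong : ∀ w₁ ∈ W, ∀ w₂ ∈ W, ∀ t : ℝ, 0 ≤ t → t ≤ 1 →
      h (t • w₁ + (1 - t) • w₂) + (((s / 2) * t * (1 - t) * ‖w₁ - w₂‖ ^ 2 : ℝ) : EReal) ≤
        (t : EReal) * h w₁ + ((1 - t : ℝ) : EReal) * h w₂)
    (hgraph : ∀ w ∈ W, ∀ z ∈ Z, (z ∈ CSubdiff h w ↔ z ∈ FSubdiff f w))
    (hval : ∀ w ∈ W, ∀ z ∈ Z, z ∈ FSubdiff f w → f w = h w)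
    (wbar zbar : E) (hwbar : wbar ∈ W) (hzbar : zbar ∈ Z)
    (hmem : zbar ∈ FSubdiff f wbar) :
    (∃ U ∈ nhds wbar, ∀ w ∈ U,
      f wbar - ((⟪zbar, wbar⟫ : ℝ) : EReal) ≤ f w - ((⟪zbar, w⟫ : ℝ) : EReal)) ∧
    (∀ w ∈ W,
      f wbar - ((⟪zbar, wbar⟫ : ℝ) : EReal) + (((s / 2) * ‖w - wbar‖ ^ 2 : ℝ) : EReal) ≤
        f w - ((⟪zbar, w⟫ : ℝ) : EReal)) :=
  variational_strong_convexity_growth_general W Z hWo f h hle s hs hstrong hgraph hval wbar zbar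
    hwbar hzbar hmem
end

section
/- Let g : Y → ℝ ∪ {−∞} be upper semicontinuous concave with nonempty compact set of maximizers Z, and let y⁰ satisfy: there exists η > dist(y⁰, Z) + σ with the ball {y : ‖y − y⁰‖ < 3η} contained in the domain where g is concave. Suppose yᵏ⁺¹ satisfies ‖yᵏ⁺¹ − pᵏ‖ ≤ ε_k where pᵏ = argmax { g(y) − (1/(2c_k))‖y − yᵏ‖² }, c_k ≥ 1, and Σε_k = σ < ∞. Then ‖yᵏ⁺¹ − y*₀‖ ≤ ‖yᵏ − y*₀‖ + ε_k for the projection y*₀ of y⁰ onto Z; in particular all iterates remain in the ball {y : ‖y − y*₀‖ < η + σ} and dist(yᵏ, Z) ≤ dist(y⁰,Z) + σ for all k. -/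
/-!
Let `y* ∈ Z` be the projection of `y⁰`. At a proximal point `p` of `y`, optimality gives
`g w - ‖w - y‖² / 2c ≤ g p - ‖p - y‖² / 2c`, so `p` is the point of `{w | g p ≤ g w}` closest
to `y`. Where `g` is concave this set contains the segment `[p, y*]`, and the projection inequality
`⟪y - p, y* - p⟫ ≤ 0` onto that segment gives `‖p - y*‖ ≤ ‖y - y*‖`. Hence each inexact step
moves away from `y*` by at most `ε_k`; by induction the iterates stay within
`dist(y⁰, Z) + σ < η` of `y*`, which keeps every proximal point inside the ball of concavity.
-/

open Set Finset

theorem norm_sub_le_of_forall_mem_segment {Y : Type*} [NormedAddCommGroup Y]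
    [InnerProductSpace ℝ Y] {y p z : Y} (h : ∀ w ∈ segment ℝ p z, ‖p - y‖ ≤ ‖w - y‖) :
    ‖p - z‖ ≤ ‖y - z‖ := by
  have hproj : ‖y - p‖ = ⨅ w : segment ℝ p z, ‖y - w‖ := by
    have : Nonempty (segment ℝ p z) := (nonempty_of_mem (left_mem_segment ℝ p z)).to_subtype
    refine le_antisymm (le_ciInf fun w => ?_)
      (ciInf_le ?_ (⟨p, left_mem_segment ℝ p z⟩ : segment ℝ p z))
    · rw [norm_sub_rev y p, norm_sub_rev y w]
      exact h w w.2
    · refine ⟨0, ?_⟩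
      rintro _ ⟨w, rfl⟩
      exact norm_nonneg _
  have hinner : inner ℝ (y - p) (z - p) ≤ 0 :=
    (norm_eq_iInf_iff_real_inner_le_zero (convex_segment p z) (left_mem_segment ℝ p z)).1 hproj
      z (right_mem_segment ℝ p z)
  have hsplit : y - z = (y - p) - (z - p) := by abel
  have hsq : ‖p - z‖ ^ 2 ≤ ‖y - z‖ ^ 2 := by
    rw [norm_sub_rev p z, hsplit, norm_sub_sq_real (y - p)]
    nlinarith [sq_nonneg ‖y - p‖]
  exact (pow_le_pow_iff_left₀ (norm_nonneg _) (norm_nonneg _) two_ne_zero).1 hsq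

section Prox

variable {Y : Type*} [SeminormedAddCommGroup Y] {g : Y → EReal} {q : ℝ} {y p : Y}

theorem prox_ne_bot_of_ne_bot
    (hp : ∀ w, g w + ((-q * ‖w - y‖ ^ 2 : ℝ) : EReal) ≤ g p + ((-q * ‖p - y‖ ^ 2 : ℝ) : EReal))
    {z : Y} (hz : g z ≠ ⊥) : g p ≠ ⊥ := by
  intro hbot
  have h := hp z
  rw [hbot, EReal.bot_add, le_bot_iff, EReal.add_eq_bot_iff] at h
  exact h.elim hz (EReal.coe_ne_bot _)

theorem norm_prox_sub_le_of_le (hq : 0 < q)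
    (hp : ∀ w, g w + ((-q * ‖w - y‖ ^ 2 : ℝ) : EReal) ≤ g p + ((-q * ‖p - y‖ ^ 2 : ℝ) : EReal))
    (hgp : g p ≠ ⊥) (hgp' : g p ≠ ⊤) {w : Y} (hw : g p ≤ g w) : ‖p - y‖ ≤ ‖w - y‖ := by
  lift g p to ℝ using ⟨hgp', hgp⟩ with P hP
  have h := (add_le_add_left hw _).trans (hp w)
  norm_cast at h
  have hsq : ‖p - y‖ ^ 2 ≤ ‖w - y‖ ^ 2 := by nlinarith
  exact (pow_le_pow_iff_left₀ (norm_nonneg _) (norm_nonneg _) two_ne_zero).1 hsq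

end Prox

theorem le_of_mem_segment_of_concave {Y : Type*} [AddCommGroup Y] [Module ℝ Y]
    {g : Y → EReal} {s : Set Y}
    (hconc : ∀ a ∈ s, ∀ b ∈ s, ∀ t : ℝ, 0 ≤ t → t ≤ 1 →
      (t : EReal) * g a + ((1 - t : ℝ) : EReal) * g b ≤ g (t • a + (1 - t) • b))
    {p z : Y} (hp : p ∈ s) (hz : z ∈ s) (hpz : g p ≤ g z) (hgz : g z ≠ ⊤) :
    ∀ w ∈ segment ℝ p z, g p ≤ g w := by
  rcases eq_or_ne (g p) ⊥ with hbot | hbot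
  · simp [hbot]
  rw [segment_eq_image]
  rintro _ ⟨t, ⟨ht0, ht1⟩, rfl⟩
  have hcomb := hconc z hz p hp t ht0 ht1
  rw [add_comm (t • z)] at hcomb
  refine le_trans ?_ hcomb
  lift g p to ℝ using ⟨(hpz.trans_lt hgz.lt_top).ne, hbot⟩ with P hP
  lift g z to ℝ using ⟨hgz, (bot_lt_iff_ne_bot.2 hbot |>.trans_le hpz).ne'⟩ with Q hQ
  have hPQ : P ≤ Q := by exact_mod_cast hpz
  norm_cast
  nlinarith

theorem norm_prox_sub_le_of_concave {Y : Type*} [NormedAddCommGroup Y] [InnerProductSpace ℝ Y]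
    {g : Y → EReal} {s : Set Y}
    (hconc : ∀ a ∈ s, ∀ b ∈ s, ∀ t : ℝ, 0 ≤ t → t ≤ 1 →
      (t : EReal) * g a + ((1 - t : ℝ) : EReal) * g b ≤ g (t • a + (1 - t) • b))
    {q : ℝ} (hq : 0 < q) {y p z : Y}
    (hp : ∀ w, g w + ((-q * ‖w - y‖ ^ 2 : ℝ) : EReal) ≤ g p + ((-q * ‖p - y‖ ^ 2 : ℝ) : EReal))
    (hps : p ∈ s) (hzs : z ∈ s) (hgp : g p ≠ ⊥) (hgz : g z ≠ ⊤) (hpz : g p ≤ g z) :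
    ‖p - z‖ ≤ ‖y - z‖ :=
  norm_sub_le_of_forall_mem_segment fun w hw =>
    norm_prox_sub_le_of_le hq hp hgp (hpz.trans_lt hgz.lt_top).ne
      (le_of_mem_segment_of_concave hconc hps hzs hpz hgz w hw)

theorem le_add_sum_range_of_succ_le_add {d ε : ℕ → ℝ} {η σ : ℝ}
    (hpart : ∀ k, ∑ i ∈ range k, ε i ≤ σ) (hη : d 0 + σ < η)
    (hstep : ∀ k, d k < η → d (k + 1) ≤ d k + ε k) (k : ℕ) :
    d k ≤ d 0 + ∑ i ∈ range k, ε i := by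
  induction k with
  | zero => simp
  | succ n ih =>
    rw [sum_range_succ]
    linarith [hstep n (by linarith [hpart n])]

theorem inexact_ppa_stay_in_ball_general
    {Y : Type*} [NormedAddCommGroup Y] [InnerProductSpace ℝ Y]
    (g : Y → EReal) (htop : ∀ w, g w ≠ ⊤)
    (Z : Set Y) (hZ : Z = {w | ∀ w', g w' ≤ g w})
    (hZcpt : IsCompact Z)
    (η σ : ℝ) (ε c : ℕ → ℝ) (y p : ℕ → Y)
    (hconc : ∀ a ∈ Metric.ball (y 0) (3 * η), ∀ b ∈ Metric.ball (y 0) (3 * η),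
      ∀ t : ℝ, 0 ≤ t → t ≤ 1 →
        (t : EReal) * g a + ((1 - t : ℝ) : EReal) * g b ≤ g (t • a + (1 - t) • b))
    (hη : Metric.infDist (y 0) Z + σ < η)
    (hc : ∀ k, 1 ≤ c k)
    (hε : ∀ k, 0 ≤ ε k) (hsummable : Summable ε) (hσ : ∑' k, ε k = σ)
    (hp : ∀ k, ∀ w : Y,
      g w + ((-(1 / (2 * c k)) * ‖w - y k‖ ^ 2 : ℝ) : EReal) ≤
        g (p k) + ((-(1 / (2 * c k)) * ‖p k - y k‖ ^ 2 : ℝ) : EReal))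
    (happrox : ∀ k, ‖y (k + 1) - p k‖ ≤ ε k)
    (ystar : Y) (hystar : ystar ∈ Z)
    (hproj : ‖y 0 - ystar‖ = Metric.infDist (y 0) Z) :
    (∀ k, ‖y (k + 1) - ystar‖ ≤ ‖y k - ystar‖ + ε k) ∧
    (∀ k, ‖y k - ystar‖ < η + σ) ∧
    (∀ k, Metric.infDist (y k) Z ≤ Metric.infDist (y 0) Z + σ) := by
  have hmax : ∀ w, g w ≤ g ystar := by rw [hZ] at hystar; exact hystar
  have hσ0 : 0 ≤ σ := hσ ▸ tsum_nonneg hε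
  have hy0 : ‖y 0 - ystar‖ + σ < η := hproj ▸ hη
  have hball : ∀ {x}, ‖x - ystar‖ < 2 * η → x ∈ Metric.ball (y 0) (3 * η) := by
    intro x hx
    rw [Metric.mem_ball, dist_eq_norm]
    linarith [norm_sub_le_norm_sub_add_norm_sub x ystar (y 0), norm_sub_rev ystar (y 0)]
  have hprox : ∀ k, ‖y k - ystar‖ < η → ‖p k - ystar‖ ≤ ‖y k - ystar‖ := by
    intro k hk
    rcases subsingleton_or_nontrivial Y with hY | hY
    · simp [Subsingleton.elim (p k) (y k)]
    -- if `g ≡ ⊥` then `Z` is the whole (noncompact) space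
    have hgz : g ystar ≠ ⊥ := fun hbot => noncompact_univ Y <| by
      convert hZcpt
      rw [hZ]
      exact (eq_univ_of_forall fun w w' => (hmax w').trans (hbot ▸ bot_le)).symm
    have hq : 0 < 1 / (2 * c k) := by have := hc k; positivity
    have hgp := prox_ne_bot_of_ne_bot (hp k) hgz
    have hpy := norm_prox_sub_le_of_le hq (hp k) hgp (htop _) (hmax (p k))
    have hps : p k ∈ Metric.ball (y 0) (3 * η) := hball <| by
      linarith [norm_sub_le_norm_sub_add_norm_sub (p k) (y k) ystar, norm_sub_rev ystar (y k)]
    have hzs : ystar ∈ Metric.ball (y 0) (3 * η) := hball <| by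
      rw [sub_self, norm_zero]
      linarith [norm_nonneg (y 0 - ystar)]
    exact norm_prox_sub_le_of_concave hconc hq (hp k) hps hzs hgp (htop _) (hmax (p k))
  have hstep : ∀ k, ‖y k - ystar‖ < η → ‖y (k + 1) - ystar‖ ≤ ‖y k - ystar‖ + ε k :=
    fun k hk => calc
      ‖y (k + 1) - ystar‖ ≤ ‖y (k + 1) - p k‖ + ‖p k - ystar‖ :=
        norm_sub_le_norm_sub_add_norm_sub _ _ _
      _ ≤ ε k + ‖y k - ystar‖ := add_le_add (happrox k) (hprox k hk)
      _ = ‖y k - ystar‖ + ε k := add_comm _ _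
  have hpart : ∀ k, ∑ i ∈ range k, ε i ≤ σ := fun k =>
    hσ ▸ hsummable.sum_le_tsum _ fun i _ => hε i
  have hbound : ∀ k, ‖y k - ystar‖ ≤ ‖y 0 - ystar‖ + σ := fun k =>
    (le_add_sum_range_of_succ_le_add hpart hy0 hstep k).trans (by linarith [hpart k])
  refine ⟨fun k => hstep k (by linarith [hbound k]), fun k => by linarith [hbound k],
    fun k => ?_⟩
  calc Metric.infDist (y k) Z ≤ ‖y k - ystar‖ := dist_eq_norm (y k) ystar ▸
        Metric.infDist_le_dist_of_mem hystar
    _ ≤ Metric.infDist (y 0) Z + σ := hproj ▸ hbound k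

/-- Stability of inexact proximal point iterations on a concave function: the iterates
stay near the solution set `Z` and drift at most by the summed errors. -/
theorem inexact_ppa_stay_in_ball
    {Y : Type*} [NormedAddCommGroup Y] [InnerProductSpace ℝ Y] [FiniteDimensional ℝ Y]
    (g : Y → EReal) (htop : ∀ w, g w ≠ ⊤)
    (husc : UpperSemicontinuous g)
    (Z : Set Y) (hZ : Z = {w | ∀ w', g w' ≤ g w})
    (hZne : Z.Nonempty) (hZcpt : IsCompact Z) (hZconv : Convex ℝ Z)
    (η σ : ℝ) (ε c : ℕ → ℝ) (y p : ℕ → Y)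
    (hconc : ∀ a ∈ Metric.ball (y 0) (3 * η), ∀ b ∈ Metric.ball (y 0) (3 * η),
      ∀ t : ℝ, 0 ≤ t → t ≤ 1 →
        (t : EReal) * g a + ((1 - t : ℝ) : EReal) * g b ≤ g (t • a + (1 - t) • b))
    (hη : Metric.infDist (y 0) Z + σ < η)
    (hc : ∀ k, 1 ≤ c k)
    (hε : ∀ k, 0 ≤ ε k) (hsummable : Summable ε) (hσ : ∑' k, ε k = σ)
    (hp : ∀ k, ∀ w : Y,
      g w + ((-(1 / (2 * c k)) * ‖w - y k‖ ^ 2 : ℝ) : EReal) ≤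
        g (p k) + ((-(1 / (2 * c k)) * ‖p k - y k‖ ^ 2 : ℝ) : EReal))
    (happrox : ∀ k, ‖y (k + 1) - p k‖ ≤ ε k)
    (ystar : Y) (hystar : ystar ∈ Z)
    (hproj : ‖y 0 - ystar‖ = Metric.infDist (y 0) Z) :
    (∀ k, ‖y (k + 1) - ystar‖ ≤ ‖y k - ystar‖ + ε k) ∧
    (∀ k, ‖y k - ystar‖ < η + σ) ∧
    (∀ k, Metric.infDist (y k) Z ≤ Metric.infDist (y 0) Z + σ) :=
  inexact_ppa_stay_in_ball_general g htop Z hZ hZcpt η σ ε c y p hconc hη hc hε hsummable hσ hp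
    happrox ystar hystar hproj
end

section
/- Let P_Ω be the coordinate projection onto an index set Ω ⊆ {1,…,m}×{1,…,n}, let X̄ = U Σ Vᵀ be a rank-r matrix with thin SVD, and suppose ȳ ∈ ℝ^{m×n} satisfies Π_{X̄}(P_Ω(ȳ)) = 0, where Π_{X̄} is the projection onto the tangent space of the fixed-rank manifold at X̄. Then for any tangent vector ξ ∈ T_{X̄} Fr(m,n,r), the Riemannian Hessian quadratic form of L(X,y) = ⟨P_Ω(X−A), y⟩ in X at (X̄, ȳ) equals ⟨ξ, Hess_X L(X̄,ȳ)[ξ]⟩ = 2 tr( ξᵀ P_Ω(ȳ) ξᵀ U Σ⁻¹ Vᵀ ). -/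
open Matrix

/-- Coordinate projection onto an index set `Ω`. -/
def coordProj {m n : ℕ} (Ω : Finset (Fin m × Fin n))
    (B : Matrix (Fin m) (Fin n) ℝ) : Matrix (Fin m) (Fin n) ℝ :=
  Matrix.of fun i j => if (i, j) ∈ Ω then B i j else 0

/-- The tangent space of the fixed-rank manifold at `X = UΣVᵀ`. -/
def fixedRankTangent {m n r : ℕ}
    (U : Matrix (Fin m) (Fin r) ℝ) (V : Matrix (Fin n) (Fin r) ℝ) :
    Set (Matrix (Fin m) (Fin n) ℝ) :=
  {Z | ∃ (A : Matrix (Fin r) (Fin r) ℝ) (Up : Matrix (Fin m) (Fin r) ℝ)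
      (Vp : Matrix (Fin n) (Fin r) ℝ),
      Uᵀ * Up = 0 ∧ Vᵀ * Vp = 0 ∧ Z = U * A * Vᵀ + Up * Vᵀ + U * Vpᵀ}

/-- Projection onto the tangent space of the fixed-rank manifold at `X = UΣVᵀ`. -/
noncomputable def fixedRankProj {m n r : ℕ}
    (U : Matrix (Fin m) (Fin r) ℝ) (V : Matrix (Fin n) (Fin r) ℝ)
    (Y : Matrix (Fin m) (Fin n) ℝ) : Matrix (Fin m) (Fin n) ℝ :=
  (U * Uᵀ) * Y * (V * Vᵀ) + ((1 : Matrix (Fin m) (Fin m) ℝ) - U * Uᵀ) * Y * (V * Vᵀ) +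
    (U * Uᵀ) * Y * ((1 : Matrix (Fin n) (Fin n) ℝ) - V * Vᵀ)

/-- The Riemannian Hessian of `L(X,y) = ⟨P_Ω(X−A), y⟩` on the fixed-rank manifold at
`X̄ = UΣVᵀ` (Euclidean gradient `G = P_Ω(ȳ)`, zero Euclidean Hessian), acting on a tangent
vector `ξ`:  `Hess L[ξ] = P_U^⊥ G (P_V^⊥ ξᵀ U) Σ⁻¹ Vᵀ + U (P_V^⊥ Gᵀ (P_U^⊥ ξ V) Σ⁻¹)ᵀ`. -/
noncomputable def rmcHess {m n r : ℕ}
    (U : Matrix (Fin m) (Fin r) ℝ) (V : Matrix (Fin n) (Fin r) ℝ)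
    (Sinv : Matrix (Fin r) (Fin r) ℝ) (G ξ : Matrix (Fin m) (Fin n) ℝ) :
    Matrix (Fin m) (Fin n) ℝ :=
  ((1 : Matrix (Fin m) (Fin m) ℝ) - U * Uᵀ) * G *
      (((1 : Matrix (Fin n) (Fin n) ℝ) - V * Vᵀ) * ξᵀ * U) * Sinv * Vᵀ +
    U * ((((1 : Matrix (Fin n) (Fin n) ℝ) - V * Vᵀ) * Gᵀ *
      (((1 : Matrix (Fin m) (Fin m) ℝ) - U * Uᵀ) * ξ * V) * Sinv)ᵀ)

lemma assoc_zero' {a b c d : ℕ} (A : Matrix (Fin a) (Fin b) ℝ) (B : Matrix (Fin b) (Fin c) ℝ)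
    (C : Matrix (Fin c) (Fin d) ℝ) (h : A * B = 0) : A * (B * C) = 0 := by
  rw [← Matrix.mul_assoc, h, Matrix.zero_mul]

lemma assoc_one' {a b c : ℕ} (A : Matrix (Fin a) (Fin b) ℝ) (B : Matrix (Fin b) (Fin a) ℝ)
    (C : Matrix (Fin a) (Fin c) ℝ) (h : A * B = 1) : A * (B * C) = C := by
  rw [← Matrix.mul_assoc, h, Matrix.one_mul]

/-- Riemannian Hessian quadratic form for the robust matrix completion Lagrangian at a
stationary point: `⟨ξ, Hess_X L(X̄,ȳ)[ξ]⟩ = 2 tr(ξᵀ P_Ω(ȳ) ξᵀ U Σ⁻¹ Vᵀ)`. -/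
theorem rmc_hessian_quadratic_form {m n r : ℕ} (Ω : Finset (Fin m × Fin n))
    (U : Matrix (Fin m) (Fin r) ℝ) (V : Matrix (Fin n) (Fin r) ℝ)
    (hU : Uᵀ * U = 1) (hV : Vᵀ * V = 1)
    (σ : Fin r → ℝ) (hσ : ∀ i, σ i ≠ 0)
    (A ybar : Matrix (Fin m) (Fin n) ℝ)
    (hstat : fixedRankProj U V (coordProj Ω ybar) = 0) :
    ∀ ξ ∈ fixedRankTangent U V,
      (ξᵀ * rmcHess U V (Matrix.diagonal fun i => (σ i)⁻¹) (coordProj Ω ybar) ξ).trace =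
        2 * (ξᵀ * coordProj Ω ybar * ξᵀ * U *
          (Matrix.diagonal fun i => (σ i)⁻¹) * Vᵀ).trace := by
  intro ξ hξ
  obtain ⟨A', Up, Vp, hUp, hVp, rfl⟩ := hξ
  set G := coordProj Ω ybar with hG
  set S : Matrix (Fin r) (Fin r) ℝ := Matrix.diagonal fun i => (σ i)⁻¹ with hS
  have hSt : Sᵀ = S := Matrix.diagonal_transpose _
  -- stationarity consequences
  have hUG : Uᵀ * G = 0 := by
    have h := congrArg (fun M => Uᵀ * M) hstat
    simp only [fixedRankProj, Matrix.mul_add, Matrix.mul_sub, Matrix.add_mul, Matrix.sub_mul,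
      Matrix.one_mul, Matrix.mul_one, Matrix.mul_zero, ← Matrix.mul_assoc, hU] at h
    have h2 : Uᵀ * G = Uᵀ * G * V * Vᵀ + (Uᵀ * G * V * Vᵀ - Uᵀ * G * V * Vᵀ) +
        (Uᵀ * G - Uᵀ * G * V * Vᵀ) := by abel
    rw [h2, h]
  have hGV : G * V = 0 := by
    have h := congrArg (fun M => M * V) hstat
    simp only [fixedRankProj, Matrix.mul_add, Matrix.mul_sub, Matrix.add_mul, Matrix.sub_mul,
      Matrix.one_mul, Matrix.mul_one, Matrix.zero_mul, Matrix.mul_assoc, hV] at h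
    have h2 : G * V = U * (Uᵀ * (G * V)) + (G * V - U * (Uᵀ * (G * V))) +
        (U * (Uᵀ * (G * V)) - U * (Uᵀ * (G * V))) := by abel
    rw [h2, h]
  have hUpU : Upᵀ * U = 0 := by
    have := congrArg Matrix.transpose hUp
    simpa using this
  have hVpV : Vpᵀ * V = 0 := by
    have := congrArg Matrix.transpose hVp
    simpa using this
  have hGtU : Gᵀ * U = 0 := by
    have := congrArg Matrix.transpose hUG
    simpa using this
  have hVGt : Vᵀ * Gᵀ = 0 := by
    have := congrArg Matrix.transpose hGV
    simpa using this
  -- associated helper rewrite rules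
  have eUU : ∀ {p : ℕ} (X : Matrix (Fin r) (Fin p) ℝ), Uᵀ * (U * X) = X :=
    fun X => assoc_one' _ _ _ hU
  have eVV : ∀ {p : ℕ} (X : Matrix (Fin r) (Fin p) ℝ), Vᵀ * (V * X) = X :=
    fun X => assoc_one' _ _ _ hV
  have eUUp : ∀ {p : ℕ} (X : Matrix (Fin r) (Fin p) ℝ), Uᵀ * (Up * X) = 0 :=
    fun X => assoc_zero' _ _ _ hUp
  have eVVp : ∀ {p : ℕ} (X : Matrix (Fin r) (Fin p) ℝ), Vᵀ * (Vp * X) = 0 :=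
    fun X => assoc_zero' _ _ _ hVp
  have eUpU : ∀ {p : ℕ} (X : Matrix (Fin r) (Fin p) ℝ), Upᵀ * (U * X) = 0 :=
    fun X => assoc_zero' _ _ _ hUpU
  have eVpV : ∀ {p : ℕ} (X : Matrix (Fin r) (Fin p) ℝ), Vpᵀ * (V * X) = 0 :=
    fun X => assoc_zero' _ _ _ hVpV
  have eUG : ∀ {p : ℕ} (X : Matrix (Fin n) (Fin p) ℝ), Uᵀ * (G * X) = 0 :=
    fun X => assoc_zero' _ _ _ hUG
  have eGV : ∀ {p : ℕ} (X : Matrix (Fin r) (Fin p) ℝ), G * (V * X) = 0 :=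
    fun X => assoc_zero' _ _ _ hGV
  have eGtU : ∀ {p : ℕ} (X : Matrix (Fin r) (Fin p) ℝ), Gᵀ * (U * X) = 0 :=
    fun X => assoc_zero' _ _ _ hGtU
  have eVGt : ∀ {p : ℕ} (X : Matrix (Fin m) (Fin p) ℝ), Vᵀ * (Gᵀ * X) = 0 :=
    fun X => assoc_zero' _ _ _ hVGt
  -- Hessian simplification
  set ξ := U * A' * Vᵀ + Up * Vᵀ + U * Vpᵀ with hξdef
  have hHess : rmcHess U V S G ξ = G * (Vp * (S * Vᵀ)) + U * (S * (Upᵀ * G)) := by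
    simp only [rmcHess, hξdef, Matrix.transpose_add, Matrix.transpose_mul,
      Matrix.transpose_transpose, Matrix.transpose_sub, Matrix.transpose_one,
      Matrix.mul_add, Matrix.add_mul, Matrix.mul_sub, Matrix.sub_mul,
      Matrix.one_mul, Matrix.mul_one, Matrix.mul_assoc,
      hU, hV, hUp, hVp, hUpU, hVpV, hUG, hGV, hGtU, hVGt,
      eUU, eVV, eUUp, eVVp, eUpU, eVpV, eUG, eGV, eGtU, eVGt,
      Matrix.mul_zero, Matrix.zero_mul, add_zero, zero_add, sub_zero, zero_sub, neg_neg,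
      sub_self, hSt]
  have key1 : ξᵀ * G = V * (Upᵀ * G) := by
    simp only [hξdef, Matrix.transpose_add, Matrix.transpose_mul, Matrix.transpose_transpose,
      Matrix.add_mul, Matrix.mul_assoc, hUG, eUG, Matrix.mul_zero, add_zero, zero_add]
  have key2 : ξᵀ * U = V * A'ᵀ + Vp := by
    simp only [hξdef, Matrix.transpose_add, Matrix.transpose_mul, Matrix.transpose_transpose,
      Matrix.add_mul, Matrix.mul_assoc, hU, hUpU, Matrix.mul_one, Matrix.mul_zero,
      add_zero, zero_add]
  have t1 : (ξᵀ * (G * (Vp * (S * Vᵀ)))).trace = (Upᵀ * (G * (Vp * S))).trace := by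
    rw [← Matrix.mul_assoc, key1, Matrix.mul_assoc, Matrix.trace_mul_comm]
    simp only [Matrix.mul_assoc, hV, Matrix.mul_one]
  have t2 : (ξᵀ * (U * (S * (Upᵀ * G)))).trace = (Upᵀ * (G * (Vp * S))).trace := by
    rw [← Matrix.mul_assoc, key2, Matrix.add_mul, Matrix.trace_add]
    have a1 : ((V * A'ᵀ) * (S * (Upᵀ * G))).trace = 0 := by
      rw [Matrix.mul_assoc, Matrix.trace_mul_comm]
      simp only [Matrix.mul_assoc, hGV, Matrix.mul_zero, Matrix.trace_zero]
    have a2 : (Vp * (S * (Upᵀ * G))).trace = (Upᵀ * (G * (Vp * S))).trace := by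
      rw [Matrix.trace_mul_comm, Matrix.mul_assoc, Matrix.trace_mul_comm]
      simp only [Matrix.mul_assoc]
    rw [a1, a2, zero_add]
  have t3 : (ξᵀ * G * ξᵀ * U * S * Vᵀ).trace = (Upᵀ * (G * (Vp * S))).trace := by
    rw [key1, Matrix.mul_assoc (V * (Upᵀ * G)) ξᵀ U, key2]
    simp only [Matrix.mul_add, Matrix.add_mul, Matrix.mul_assoc, eGV, Matrix.mul_zero,
      Matrix.zero_mul, add_zero, zero_add]
    rw [Matrix.trace_mul_comm]
    simp only [Matrix.mul_assoc, hV, Matrix.mul_one]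
  rw [hHess, Matrix.mul_add, Matrix.trace_add, t1, t2, t3]
  ring
end
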